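/- Soundness of Manthan3's termination conditions: let φ : ({0,1}^n × {0,1}^m) → {0,1} with dependency sets H_1,...,H_m and candidate vector f where each f_i depends only on H_i. (a) If the error formula E(x, y') := ¬φ(x, y') ∧ (y' = f(x)) is unsatisfiable, then f is a Henkin function vector. (b) If E is satisfiable with witness (δ_X, δ_{Y'}) and φ(δ_X, y) = 0 for all y, then no Henkin function vector exists. These two conditions are mutually exclusive. -/
import Mathlib

def DependsOnlyOn {n : ℕ} (H : Set (Fin n)) (f : (Fin n → Bool) → Bool) : Prop :=
  ∀ x x' : Fin n → Bool, (∀ j ∈ H, x j = x' j) → f x = f x'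

def IsHenkinVector {n m : ℕ} (φ : (Fin n → Bool) → (Fin m → Bool) → Bool)
    (H : Fin m → Set (Fin n)) (f : Fin m → (Fin n → Bool) → Bool) : Prop :=
  (∀ i, DependsOnlyOn (H i) (f i)) ∧ ∀ x : Fin n → Bool, φ x (fun i => f i x) = true

/-- Soundness of Manthan3's termination conditions: (a) if the error formula is
unsatisfiable then `f` is a Henkin vector; (b) if it is satisfiable with a
witness whose universal part cannot be extended to a model, then no Henkin
vector exists; and (a), (b) are mutually exclusive. -/
theorem stmt_17 {n m : ℕ} (φ : (Fin n → Bool) → (Fin m → Bool) → Bool)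
    (H : Fin m → Set (Fin n)) (f : Fin m → (Fin n → Bool) → Bool)
    (hdep : ∀ i, DependsOnlyOn (H i) (f i)) :
    ((¬ ∃ (x : Fin n → Bool) (y' : Fin m → Bool),
        φ x y' = false ∧ y' = fun i => f i x) → IsHenkinVector φ H f) ∧
    (∀ (δX : Fin n → Bool) (δY' : Fin m → Bool),
        φ δX δY' = false → δY' = (fun i => f i δX) →
        (∀ y : Fin m → Bool, φ δX y = false) →
        ¬ ∃ g, IsHenkinVector φ H g) ∧
    ¬ ((¬ ∃ (x : Fin n → Bool) (y' : Fin m → Bool),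
          φ x y' = false ∧ y' = fun i => f i x) ∧
        ∃ (δX : Fin n → Bool) (δY' : Fin m → Bool),
          φ δX δY' = false ∧ δY' = (fun i => f i δX) ∧
            ∀ y : Fin m → Bool, φ δX y = false) := by
  refine ⟨fun h => ⟨hdep, fun x => ?_⟩, fun δX δY' hf _ hall => ?_, ?_⟩
  · by_contra hc
    exact h ⟨x, _, Bool.eq_false_iff.mpr hc, rfl⟩
  · rintro ⟨g, _, hg⟩
    have := hg δX
    rw [hall] at this
    exact Bool.false_ne_true this
  · rintro ⟨h, δX, δY', hf, heq, _⟩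
    exact h ⟨δX, δY', hf, heq⟩
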